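/- arXiv:2310.17245 — 6 statements merged into one kernel-verified Lean document; each statement's English description precedes it below -/
import Mathlib

section
/- Let S and A be nonempty finite types, π a policy, γ ∈ [0,1), T₁ and T₂ transition kernels, r₁, r₂ : S × A → ℝ rewards, and ε_r, ε_T, M ≥ 0. Suppose that for all (s,a): |r₁(s,a) − r₂(s,a)| ≤ ε_r and ∑_{s'} |T₁ s a s' − T₂ s a s'| ≤ ε_T. Then for every Q : S × A → ℝ with ‖Q‖∞ ≤ M and every (s,a): |(B^{T₁,r₁,π} Q)(s,a) − (B^{T₂,r₂,π} Q)(s,a)| ≤ ε_r + γ·ε_T·M. -/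
open Finset

section Defs

variable {S A : Type*} [Fintype S] [Fintype A]

/-- A transition kernel: nonnegative entries, each row sums to one. -/
def IsKernel (T : S → A → S → ℝ) : Prop :=
  (∀ s a s', 0 ≤ T s a s') ∧ ∀ s a, ∑ s', T s a s' = 1

/-- A policy: nonnegative probabilities summing to one at each state. -/
def IsPolicy (π : S → A → ℝ) : Prop :=
  (∀ s a, 0 ≤ π s a) ∧ ∀ s, ∑ a, π s a = 1

/-- The state–action transition matrix `T^π`. -/
def saMatrix (T : S → A → S → ℝ) (π : S → A → ℝ) :
    Matrix (S × A) (S × A) ℝ :=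
  Matrix.of fun p q => T p.1 p.2 q.1 * π q.1 q.2

/-- The Bellman operator `B^{T,r,π} Q = r + γ · T^π Q`. -/
def bellman (T : S → A → S → ℝ) (r : S × A → ℝ) (π : S → A → ℝ) (γ : ℝ)
    (Q : S × A → ℝ) : S × A → ℝ :=
  fun p => r p + γ * ∑ q, saMatrix T π p q * Q q

/-- The operator `S^π = (I − γ·T^π)⁻¹` acting on functions `S × A → ℝ`. -/
noncomputable def Sop [DecidableEq S] [DecidableEq A]
    (T : S → A → S → ℝ) (π : S → A → ℝ) (γ : ℝ) (u : S × A → ℝ) :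
    S × A → ℝ :=
  ((1 : Matrix (S × A) (S × A) ℝ) - γ • saMatrix T π)⁻¹.mulVec u

end Defs

/-- Operator-difference bound: if the rewards differ by at most `ε_r` and the
kernels differ by at most `ε_T` in total variation, the Bellman operators
applied to any `Q` with `‖Q‖∞ ≤ M` differ by at most `ε_r + γ·ε_T·M`. -/
theorem stmt_3 {S A : Type*} [Fintype S] [Fintype A] [Nonempty S] [Nonempty A]
    (π : S → A → ℝ) (hπ : IsPolicy π)
    (γ : ℝ) (hγ0 : 0 ≤ γ) (hγ1 : γ < 1)
    (T₁ T₂ : S → A → S → ℝ) (hT₁ : IsKernel T₁) (hT₂ : IsKernel T₂)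
    (r₁ r₂ : S × A → ℝ)
    (εr εT M : ℝ) (hεr : 0 ≤ εr) (hεT : 0 ≤ εT) (hM : 0 ≤ M)
    (hr : ∀ p : S × A, |r₁ p - r₂ p| ≤ εr)
    (hTd : ∀ s a, ∑ s', |T₁ s a s' - T₂ s a s'| ≤ εT)
    (Q : S × A → ℝ) (hQ : ‖Q‖ ≤ M) :
    ∀ p : S × A,
      |bellman T₁ r₁ π γ Q p - bellman T₂ r₂ π γ Q p| ≤ εr + γ * εT * M := by
  intro p
  obtain ⟨s, a⟩ := p
  have hQb : ∀ q : S × A, |Q q| ≤ M := by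
    intro q
    calc |Q q| = ‖Q q‖ := rfl
    _ ≤ ‖Q‖ := norm_le_pi_norm Q q
    _ ≤ M := hQ
  have key : |∑ q : S × A, saMatrix T₁ π (s, a) q * Q q -
      ∑ q : S × A, saMatrix T₂ π (s, a) q * Q q| ≤ εT * M := by
    rw [← Finset.sum_sub_distrib]
    calc |∑ q : S × A, (saMatrix T₁ π (s, a) q * Q q - saMatrix T₂ π (s, a) q * Q q)|
        ≤ ∑ q : S × A, |saMatrix T₁ π (s, a) q * Q q - saMatrix T₂ π (s, a) q * Q q| :=
          Finset.abs_sum_le_sum_abs _ _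
      _ = ∑ s' : S, ∑ a' : A, |(T₁ s a s' - T₂ s a s') * π s' a' * Q (s', a')| := by
          rw [← Finset.sum_product']
          apply Finset.sum_congr rfl
          intro q _
          congr 1
          simp [saMatrix]
          ring
      _ ≤ ∑ s' : S, ∑ a' : A, |T₁ s a s' - T₂ s a s'| * π s' a' * M := by
          apply Finset.sum_le_sum; intro s' _
          apply Finset.sum_le_sum; intro a' _
          rw [abs_mul, abs_mul, abs_of_nonneg (hπ.1 s' a')]
          exact mul_le_mul_of_nonneg_left (hQb _)
            (mul_nonneg (abs_nonneg _) (hπ.1 s' a'))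
      _ = ∑ s' : S, |T₁ s a s' - T₂ s a s'| * M := by
          apply Finset.sum_congr rfl
          intro s' _
          rw [← Finset.sum_mul, ← Finset.mul_sum, hπ.2 s', mul_one]
      _ = (∑ s' : S, |T₁ s a s' - T₂ s a s'|) * M := by rw [Finset.sum_mul]
      _ ≤ εT * M := mul_le_mul_of_nonneg_right (hTd s a) hM
  have expand : bellman T₁ r₁ π γ Q (s, a) - bellman T₂ r₂ π γ Q (s, a)
      = (r₁ (s, a) - r₂ (s, a)) + γ * (∑ q : S × A, saMatrix T₁ π (s, a) q * Q q -
        ∑ q : S × A, saMatrix T₂ π (s, a) q * Q q) := by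
    simp [bellman]; ring
  rw [expand]
  calc |(r₁ (s, a) - r₂ (s, a)) + γ * (∑ q : S × A, saMatrix T₁ π (s, a) q * Q q -
        ∑ q : S × A, saMatrix T₂ π (s, a) q * Q q)|
      ≤ |r₁ (s, a) - r₂ (s, a)| + |γ * _| := abs_add_le _ _
    _ ≤ εr + γ * (εT * M) := by
        apply add_le_add (hr _)
        rw [abs_mul, abs_of_nonneg hγ0]
        exact mul_le_mul_of_nonneg_left key hγ0
    _ = εr + γ * εT * M := by ring
end

section
/- In the CROP setup, fix β ≥ 0 and let B_CROP denote the operator Q ↦ (1−f)·B^{T̄, r̂_β, π} Q + f·B^{T̂, r̂_β, π} Q, which equals B^{T_f, r̂_β, π}. Then for every M ≥ 0, every Q : S × A → ℝ with ‖Q‖∞ ≤ M, and every (s,a): |(B_CROP Q)(s,a) − [(B^{T,R,π} Q)(s,a) − β·μ/π̄ s a]| ≤ C_r/√(N(s,a)) + ε_r + γ·(C_T/√(N(s,a)) + f·ε_T)·M. In particular B_CROP Q ≤ B^{T,R,π} Q − β·μ/π̄ + φ_M and B_CROP Q ≥ B^{T,R,π} Q − β·μ/π̄ − φ_M pointwise,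 where φ_M(s,a) = C_r/√(N(s,a)) + ε_r + γ·(C_T/√(N(s,a)) + f·ε_T)·M. -/
open Finset

/-- Equations 14 and 16 of the paper, in two-sided form: the CROP Bellman
operator `B_CROP = (1−f)·B^{T̄,r̂_β,π} + f·B^{T̂,r̂_β,π} = B^{T_f,r̂_β,π}`
deviates from `B^{T,R,π} Q − β·μ/π̄` by at most
`φ_M = C_r/√N + ε_r + γ·(C_T/√N + f·ε_T)·M` on any `Q` with `‖Q‖∞ ≤ M`. -/
theorem stmt_7 {S A : Type*} [Fintype S] [Fintype A] [Nonempty S] [Nonempty A]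
    (T : S → A → S → ℝ) (hT : IsKernel T)
    (R : S × A → ℝ) (Rmax : ℝ) (hR : ∀ p : S × A, |R p| ≤ Rmax)
    (πbar : S → A → ℝ) (hπbar : IsPolicy πbar)
    (hπbarpos : ∀ s a, 0 < πbar s a)
    (μ : ℝ) (hμ : μ = (Fintype.card A : ℝ)⁻¹)
    (π : S → A → ℝ) (hπ : IsPolicy π)
    (γ : ℝ) (hγ0 : 0 ≤ γ) (hγ1 : γ < 1)
    (N : S × A → ℝ) (hN : ∀ p : S × A, 1 ≤ N p)
    (Cr CT εr εT : ℝ)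
    (hCr : 0 ≤ Cr) (hCT : 0 ≤ CT) (hεr : 0 ≤ εr) (hεT : 0 ≤ εT)
    (f : ℝ) (hf0 : 0 ≤ f) (hf1 : f ≤ 1)
    (Tbar That : S → A → S → ℝ) (hTbar : IsKernel Tbar) (hThat : IsKernel That)
    (hTbarT : ∀ s a, ∑ s', |Tbar s a s' - T s a s'| ≤ CT / Real.sqrt (N (s, a)))
    (hThatTbar : ∀ s a, ∑ s', |That s a s' - Tbar s a s'| ≤ εT)
    (rbar rhat : ℝ → S × A → ℝ)
    (hrbar : ∀ β, 0 ≤ β → ∀ p : S × A,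
      |rbar β p - (R p - β * μ / πbar p.1 p.2)| ≤ Cr / Real.sqrt (N p))
    (hrhat : ∀ β, 0 ≤ β → ∀ p : S × A, |rhat β p - rbar β p| ≤ εr)
    (Tf : S → A → S → ℝ)
    (hTf : ∀ s a s', Tf s a s' = (1 - f) * Tbar s a s' + f * That s a s')
    (β : ℝ) (hβ : 0 ≤ β) (M : ℝ) (hM : 0 ≤ M)
    (Q : S × A → ℝ) (hQ : ‖Q‖ ≤ M) :
    (∀ p : S × A, bellman Tf (rhat β) π γ Q p
        = (1 - f) * bellman Tbar (rhat β) π γ Q p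
          + f * bellman That (rhat β) π γ Q p) ∧
    (∀ p : S × A,
      |bellman Tf (rhat β) π γ Q p
          - (bellman T R π γ Q p - β * μ / πbar p.1 p.2)|
        ≤ Cr / Real.sqrt (N p) + εr
          + γ * (CT / Real.sqrt (N p) + f * εT) * M) ∧
    (∀ p : S × A,
      bellman Tf (rhat β) π γ Q p
        ≤ bellman T R π γ Q p - β * μ / πbar p.1 p.2
          + (Cr / Real.sqrt (N p) + εr
            + γ * (CT / Real.sqrt (N p) + f * εT) * M)) ∧
    (∀ p : S × A,
      bellman T R π γ Q p - β * μ / πbar p.1 p.2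
          - (Cr / Real.sqrt (N p) + εr
            + γ * (CT / Real.sqrt (N p) + f * εT) * M)
        ≤ bellman Tf (rhat β) π γ Q p) := by
  obtain ⟨hπnn, hπsum⟩ := hπ
  -- total variation bound on Tf vs T
  have hΔ : ∀ s a, ∑ s', |Tf s a s' - T s a s'|
      ≤ CT / Real.sqrt (N (s, a)) + f * εT := by
    intro s a
    have h1 : ∀ s', |Tf s a s' - T s a s'|
        ≤ |Tbar s a s' - T s a s'| + f * |That s a s' - Tbar s a s'| := by
      intro s'
      rw [hTf]
      have he : (1 - f) * Tbar s a s' + f * That s a s' - T s a s'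
          = (Tbar s a s' - T s a s') + f * (That s a s' - Tbar s a s') := by ring
      rw [he]
      calc |(Tbar s a s' - T s a s') + f * (That s a s' - Tbar s a s')|
          ≤ |Tbar s a s' - T s a s'| + |f * (That s a s' - Tbar s a s')| := abs_add_le _ _
        _ = |Tbar s a s' - T s a s'| + f * |That s a s' - Tbar s a s'| := by
            rw [abs_mul, abs_of_nonneg hf0]
    calc ∑ s', |Tf s a s' - T s a s'|
        ≤ ∑ s', (|Tbar s a s' - T s a s'| + f * |That s a s' - Tbar s a s'|) :=
          Finset.sum_le_sum fun s' _ => h1 s'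
      _ = (∑ s', |Tbar s a s' - T s a s'|) + f * ∑ s', |That s a s' - Tbar s a s'| := by
          rw [Finset.sum_add_distrib, Finset.mul_sum]
      _ ≤ CT / Real.sqrt (N (s, a)) + f * εT :=
          add_le_add (hTbarT s a) (mul_le_mul_of_nonneg_left (hThatTbar s a) hf0)
  have key : ∀ p : S × A,
      |bellman Tf (rhat β) π γ Q p
          - (bellman T R π γ Q p - β * μ / πbar p.1 p.2)|
        ≤ Cr / Real.sqrt (N p) + εr
          + γ * (CT / Real.sqrt (N p) + f * εT) * M := by
    rintro ⟨s, a⟩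
    have hsub : ∑ q : S × A, (Tf s a q.1 - T s a q.1) * (π q.1 q.2 * Q q)
        = (∑ q : S × A, Tf s a q.1 * π q.1 q.2 * Q q)
          - ∑ q : S × A, T s a q.1 * π q.1 q.2 * Q q := by
      rw [← Finset.sum_sub_distrib]
      exact Finset.sum_congr rfl fun q _ => by ring
    have hid : bellman Tf (rhat β) π γ Q (s, a)
        - (bellman T R π γ Q (s, a) - β * μ / πbar s a)
        = (rhat β (s, a) - (R (s, a) - β * μ / πbar s a))
          + γ * ∑ q : S × A, (Tf s a q.1 - T s a q.1) * (π q.1 q.2 * Q q) := by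
      simp only [bellman, saMatrix, Matrix.of_apply, hsub]
      ring
    rw [hid]
    have hrewbd : |rhat β (s, a) - (R (s, a) - β * μ / πbar s a)|
        ≤ Cr / Real.sqrt (N (s, a)) + εr := by
      have := abs_add_le (rhat β (s, a) - rbar β (s, a))
        (rbar β (s, a) - (R (s, a) - β * μ / πbar s a))
      have heq : rhat β (s, a) - (R (s, a) - β * μ / πbar s a)
          = (rhat β (s, a) - rbar β (s, a))
            + (rbar β (s, a) - (R (s, a) - β * μ / πbar s a)) := by ring
      rw [heq]
      calc _ ≤ _ := this
        _ ≤ εr + Cr / Real.sqrt (N (s, a)) :=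
            add_le_add (hrhat β hβ (s, a)) (hrbar β hβ (s, a))
        _ = Cr / Real.sqrt (N (s, a)) + εr := by ring
    have hsumbd : |∑ q : S × A, (Tf s a q.1 - T s a q.1) * (π q.1 q.2 * Q q)|
        ≤ (CT / Real.sqrt (N (s, a)) + f * εT) * M := by
      calc |∑ q : S × A, (Tf s a q.1 - T s a q.1) * (π q.1 q.2 * Q q)|
          ≤ ∑ q : S × A, |(Tf s a q.1 - T s a q.1) * (π q.1 q.2 * Q q)| :=
            Finset.abs_sum_le_sum_abs _ _
        _ ≤ ∑ q : S × A, |Tf s a q.1 - T s a q.1| * (π q.1 q.2 * M) := by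
            refine Finset.sum_le_sum fun q _ => ?_
            rw [abs_mul, abs_mul, abs_of_nonneg (hπnn q.1 q.2)]
            refine mul_le_mul_of_nonneg_left ?_ (abs_nonneg _)
            refine mul_le_mul_of_nonneg_left ?_ (hπnn q.1 q.2)
            exact (norm_le_pi_norm Q q).trans hQ
        _ = ∑ s' : S, |Tf s a s' - T s a s'| * M := by
            rw [Fintype.sum_prod_type]
            refine Finset.sum_congr rfl fun s' _ => ?_
            simp only [Prod.fst, Prod.snd]
            rw [← Finset.mul_sum, ← Finset.sum_mul, hπsum s', one_mul]
        _ = (∑ s' : S, |Tf s a s' - T s a s'|) * M := by rw [Finset.sum_mul]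
        _ ≤ (CT / Real.sqrt (N (s, a)) + f * εT) * M :=
            mul_le_mul_of_nonneg_right (hΔ s a) hM
    calc |(rhat β (s, a) - (R (s, a) - β * μ / πbar s a))
          + γ * ∑ q : S × A, (Tf s a q.1 - T s a q.1) * (π q.1 q.2 * Q q)|
        ≤ |rhat β (s, a) - (R (s, a) - β * μ / πbar s a)|
          + |γ * ∑ q : S × A, (Tf s a q.1 - T s a q.1) * (π q.1 q.2 * Q q)| :=
          abs_add_le _ _
      _ ≤ (Cr / Real.sqrt (N (s, a)) + εr)
          + γ * ((CT / Real.sqrt (N (s, a)) + f * εT) * M) := by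
          refine add_le_add hrewbd ?_
          rw [abs_mul, abs_of_nonneg hγ0]
          exact mul_le_mul_of_nonneg_left hsumbd hγ0
      _ = Cr / Real.sqrt (N (s, a)) + εr
          + γ * (CT / Real.sqrt (N (s, a)) + f * εT) * M := by ring
  refine ⟨?_, key, fun p => ?_, fun p => ?_⟩
  · rintro ⟨s, a⟩
    simp only [bellman, saMatrix, Matrix.of_apply, hTf]
    have hsplit : ∑ q : S × A,
        ((1 - f) * Tbar s a q.1 + f * That s a q.1) * π q.1 q.2 * Q q
        = (1 - f) * (∑ q : S × A, Tbar s a q.1 * π q.1 q.2 * Q q)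
          + f * ∑ q : S × A, That s a q.1 * π q.1 q.2 * Q q := by
      rw [Finset.mul_sum, Finset.mul_sum, ← Finset.sum_add_distrib]
      exact Finset.sum_congr rfl fun q _ => by ring
    rw [hsplit]; ring
  · have := (abs_le.1 (key p)).2; linarith
  · have := (abs_le.1 (key p)).1; linarith
end

section
/- In the CROP setup, for every β ≥ 0 and every (s,a): |Q̂^π_β(s,a) − Q^π(s,a) + β·[S^π_f (μ/π̄)](s,a)| ≤ [S^π_f ψ](s,a), where (μ/π̄)(s,a) = μ/π̄ s a. Equivalently, Q^π − β·S^π_f(μ/π̄) − S^π_f ψ ≤ Q̂^π_β ≤ Q^π − β·S^π_f(μ/π̄) + S^π_f ψ pointwise. -/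
/-!
Write `M = γ • T_f^π`: it is nonnegative with row sums `γ < 1`, so `1 - M` obeys a maximum
principle: `|(1 - M) x| ≤ (1 - M) w` pointwise forces `|x| ≤ w` (look at a point where `|x| - w`
is largest). Hence `1 - M` is invertible and `|x| ≤ S^π_f u` whenever `|(1 - M) x| ≤ u`.
Subtracting the fixed-point equations gives
`(1 - M) (Q̂ - Q^π) = r̂_β - R + γ (T_f^π - T^π) Q^π`. Adding `β μ/π̄` turns the reward error
into `r̂_β - r_β`, and the kernel error is controlled by `|Q^π| ≤ R_max/(1 - γ)` (the maximum
principle for `T^π` with a constant `w`), so the result is bounded by `ψ`. Apply the principle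
to `x = Q̂ - Q^π + β S^π_f (μ/π̄)`.
-/

open Finset

open Matrix

section MaximumPrinciple

variable {n : Type*} [Fintype n] [DecidableEq n] {M : Matrix n n ℝ}

theorem one_sub_mulVec_apply (M : Matrix n n ℝ) (x : n → ℝ) (p : n) :
    ((1 - M) *ᵥ x) p = x p - ∑ q, M p q * x q := by
  rw [sub_mulVec, one_mulVec]; rfl

theorem abs_le_of_abs_one_sub_mulVec_le (hM : ∀ p q, 0 ≤ M p q) (hrow : ∀ p, ∑ q, M p q < 1)
    {x w : n → ℝ} (h : ∀ p, |((1 - M) *ᵥ x) p| ≤ ((1 - M) *ᵥ w) p) (p : n) :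
    |x p| ≤ w p := by
  obtain ⟨p₀, -, hp₀⟩ := exists_max_image univ (fun p => |x p| - w p) ⟨p, mem_univ p⟩
  set c := |x p₀| - w p₀
  have hx : |x p₀| ≤ |((1 - M) *ᵥ x) p₀| + ∑ q, M p₀ q * |x q| :=
    calc |x p₀| = |((1 - M) *ᵥ x) p₀ + ∑ q, M p₀ q * x q| := by
          rw [one_sub_mulVec_apply, sub_add_cancel]
      _ ≤ |((1 - M) *ᵥ x) p₀| + ∑ q, |M p₀ q * x q| :=
          (abs_add_le _ _).trans (add_le_add_right (abs_sum_le_sum_abs _ _) _)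
      _ = |((1 - M) *ᵥ x) p₀| + ∑ q, M p₀ q * |x q| := by
          simp only [abs_mul, abs_of_nonneg (hM p₀ _)]
  have hsum : ∑ q, M p₀ q * |x q| ≤ ∑ q, M p₀ q * w q + (∑ q, M p₀ q) * c :=
    calc ∑ q, M p₀ q * |x q| ≤ ∑ q, M p₀ q * (w q + c) :=
          sum_le_sum fun q _ => mul_le_mul_of_nonneg_left
            (by linarith [hp₀ q (mem_univ q)]) (hM p₀ q)
      _ = ∑ q, M p₀ q * w q + (∑ q, M p₀ q) * c := by
          rw [sum_mul, ← sum_add_distrib]; simp only [mul_add]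
  have hw := h p₀
  rw [one_sub_mulVec_apply M w] at hw
  have hc : c ≤ (∑ q, M p₀ q) * c := by linarith
  have hc0 : c ≤ 0 := by nlinarith [hrow p₀]
  linarith [hp₀ p (mem_univ p)]

theorem isUnit_one_sub (hM : ∀ p q, 0 ≤ M p q) (hrow : ∀ p, ∑ q, M p q < 1) :
    IsUnit (1 - M) := by
  refine mulVec_injective_iff_isUnit.mp fun x y hxy => funext fun p => ?_
  have h : ∀ p, |((1 - M) *ᵥ (x - y)) p| ≤ ((1 - M) *ᵥ 0) p := by
    simp [mulVec_sub, hxy]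
  simpa [sub_eq_zero] using abs_le_of_abs_one_sub_mulVec_le hM hrow h p

theorem one_sub_mulVec_inv_mulVec (hM : ∀ p q, 0 ≤ M p q) (hrow : ∀ p, ∑ q, M p q < 1)
    (u : n → ℝ) : (1 - M) *ᵥ ((1 - M)⁻¹ *ᵥ u) = u := by
  rw [mulVec_mulVec, mul_nonsing_inv _ ((isUnit_iff_isUnit_det _).mp (isUnit_one_sub hM hrow)),
    one_mulVec]

end MaximumPrinciple

section MDP

variable {S A : Type*} {T T' : S → A → S → ℝ} {π : S → A → ℝ} {γ : ℝ}

theorem IsKernel.mix [Fintype S] {T₁ T₂ : S → A → S → ℝ} (h₁ : IsKernel T₁)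
    (h₂ : IsKernel T₂) {f : ℝ} (hf0 : 0 ≤ f) (hf1 : f ≤ 1) :
    IsKernel fun s a s' => (1 - f) * T₁ s a s' + f * T₂ s a s' := by
  refine ⟨fun s a s' => ?_, fun s a => ?_⟩
  · have := h₁.1 s a s'
    have := h₂.1 s a s'
    positivity
  · rw [sum_add_distrib, ← mul_sum, ← mul_sum, h₁.2, h₂.2]
    ring

theorem sum_abs_mix_sub_le {ι : Type*} (s : Finset ι) (u₁ u₂ v : ι → ℝ) {f : ℝ} (hf0 : 0 ≤ f) :
    ∑ i ∈ s, |(1 - f) * u₁ i + f * u₂ i - v i|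
      ≤ ∑ i ∈ s, |u₁ i - v i| + f * ∑ i ∈ s, |u₂ i - u₁ i| := by
  rw [mul_sum, ← sum_add_distrib]
  refine sum_le_sum fun i _ => ?_
  calc |(1 - f) * u₁ i + f * u₂ i - v i| = |(u₁ i - v i) + f * (u₂ i - u₁ i)| := by ring_nf
    _ ≤ |u₁ i - v i| + f * |u₂ i - u₁ i| :=
        (abs_add_le _ _).trans_eq (by rw [abs_mul, abs_of_nonneg hf0])

theorem abs_sum_policy_mul_le [Fintype A] (hπ : IsPolicy π) {Q : S × A → ℝ} {K : ℝ}
    (hQ : ∀ q, |Q q| ≤ K) (s : S) : |∑ a, π s a * Q (s, a)| ≤ K :=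
  calc |∑ a, π s a * Q (s, a)| ≤ ∑ a, π s a * K :=
        (abs_sum_le_sum_abs _ _).trans <| sum_le_sum fun a _ => by
          rw [abs_mul, abs_of_nonneg (hπ.1 s a)]
          exact mul_le_mul_of_nonneg_left (hQ _) (hπ.1 s a)
    _ = K := by rw [← sum_mul, hπ.2, one_mul]

variable [Fintype S] [Fintype A]

theorem saMatrix_nonneg (hT : IsKernel T) (hπ : IsPolicy π) (p q : S × A) :
    0 ≤ saMatrix T π p q :=
  mul_nonneg (hT.1 _ _ _) (hπ.1 _ _)

theorem saMatrix_mulVec_apply (Q : S × A → ℝ) (p : S × A) :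
    (saMatrix T π *ᵥ Q) p = ∑ s', T p.1 p.2 s' * ∑ a', π s' a' * Q (s', a') := by
  simp only [mulVec, dotProduct, saMatrix, of_apply, Fintype.sum_prod_type, mul_sum, mul_assoc]

theorem sum_saMatrix (hT : IsKernel T) (hπ : IsPolicy π) (p : S × A) :
    ∑ q, saMatrix T π p q = 1 := by
  simpa [mulVec, dotProduct, hπ.2, hT.2] using
    saMatrix_mulVec_apply (T := T) (π := π) (fun _ => 1) p

theorem abs_saMatrix_mulVec_sub_le (hπ : IsPolicy π) {Q : S × A → ℝ} {K : ℝ}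
    (hQ : ∀ q, |Q q| ≤ K) (p : S × A) :
    |(saMatrix T' π *ᵥ Q) p - (saMatrix T π *ᵥ Q) p|
      ≤ (∑ s', |T' p.1 p.2 s' - T p.1 p.2 s'|) * K := by
  rw [saMatrix_mulVec_apply, saMatrix_mulVec_apply, ← sum_sub_distrib, sum_mul]
  refine (abs_sum_le_sum_abs _ _).trans (sum_le_sum fun s' _ => ?_)
  rw [← sub_mul, abs_mul]
  exact mul_le_mul_of_nonneg_left (abs_sum_policy_mul_le hπ hQ s') (abs_nonneg _)

theorem bellman_eq_add_smul_mulVec (r Q : S × A → ℝ) :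
    bellman T r π γ Q = r + γ • saMatrix T π *ᵥ Q :=
  rfl

theorem smul_saMatrix_nonneg (hT : IsKernel T) (hπ : IsPolicy π) (hγ0 : 0 ≤ γ) (p q : S × A) :
    0 ≤ (γ • saMatrix T π) p q :=
  mul_nonneg hγ0 (saMatrix_nonneg hT hπ p q)

theorem sum_smul_saMatrix (hT : IsKernel T) (hπ : IsPolicy π) (p : S × A) :
    ∑ q, (γ • saMatrix T π) p q = γ := by
  simp only [Matrix.smul_apply, smul_eq_mul, ← mul_sum, sum_saMatrix hT hπ, mul_one]

variable [DecidableEq S] [DecidableEq A]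

theorem one_sub_smul_saMatrix_mulVec_of_bellman_eq {r Q : S × A → ℝ}
    (h : bellman T r π γ Q = Q) : (1 - γ • saMatrix T π) *ᵥ Q = r := by
  rw [sub_mulVec, one_mulVec, smul_mulVec]
  nth_rewrite 1 [← h]
  rw [bellman_eq_add_smul_mulVec, add_sub_cancel_right]

theorem one_sub_smul_saMatrix_mulVec_eq_sub_of_bellman_eq {r Q : S × A → ℝ}
    (h : bellman T r π γ Q = Q) (T' : S → A → S → ℝ) :
    (1 - γ • saMatrix T' π) *ᵥ Q = r - γ • (saMatrix T' π *ᵥ Q - saMatrix T π *ᵥ Q) := by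
  rw [sub_mulVec, one_mulVec, smul_mulVec]
  nth_rewrite 1 [← h]
  rw [bellman_eq_add_smul_mulVec, smul_sub]
  abel

theorem abs_le_of_bellman_eq (hT : IsKernel T) (hπ : IsPolicy π) (hγ0 : 0 ≤ γ) (hγ1 : γ < 1)
    {r Q : S × A → ℝ} {Rmax : ℝ} (hr : ∀ p, |r p| ≤ Rmax) (hQ : bellman T r π γ Q = Q)
    (p : S × A) : |Q p| ≤ Rmax / (1 - γ) := by
  refine abs_le_of_abs_one_sub_mulVec_le (w := fun _ => Rmax / (1 - γ))
    (smul_saMatrix_nonneg hT hπ hγ0) (fun p => (sum_smul_saMatrix hT hπ p).trans_lt hγ1)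
    (fun p => ?_) p
  rw [one_sub_smul_saMatrix_mulVec_of_bellman_eq hQ, one_sub_mulVec_apply, ← sum_mul,
    sum_smul_saMatrix hT hπ, ← one_sub_mul, mul_div_cancel₀ _ (sub_pos.mpr hγ1).ne']
  exact hr p

theorem one_sub_smul_saMatrix_mulVec_Sop (hT : IsKernel T) (hπ : IsPolicy π) (hγ0 : 0 ≤ γ)
    (hγ1 : γ < 1) (u : S × A → ℝ) : (1 - γ • saMatrix T π) *ᵥ Sop T π γ u = u :=
  one_sub_mulVec_inv_mulVec (smul_saMatrix_nonneg hT hπ hγ0)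
    (fun p => (sum_smul_saMatrix hT hπ p).trans_lt hγ1) u

theorem abs_le_Sop (hT : IsKernel T) (hπ : IsPolicy π) (hγ0 : 0 ≤ γ) (hγ1 : γ < 1)
    {x u : S × A → ℝ} (h : ∀ p, |((1 - γ • saMatrix T π) *ᵥ x) p| ≤ u p) (p : S × A) :
    |x p| ≤ Sop T π γ u p := by
  refine abs_le_of_abs_one_sub_mulVec_le (smul_saMatrix_nonneg hT hπ hγ0)
    (fun p => (sum_smul_saMatrix hT hπ p).trans_lt hγ1) (fun p => ?_) p
  rw [one_sub_smul_saMatrix_mulVec_Sop hT hπ hγ0 hγ1]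
  exact h p

end MDP

theorem stmt_8_general {S A : Type*} [Fintype S] [Fintype A]
    [DecidableEq S] [DecidableEq A]
    (T : S → A → S → ℝ) (hT : IsKernel T)
    (R : S × A → ℝ) (Rmax : ℝ) (hR : ∀ p : S × A, |R p| ≤ Rmax)
    (πbar : S → A → ℝ)
    (μ : ℝ)
    (π : S → A → ℝ) (hπ : IsPolicy π)
    (γ : ℝ) (hγ0 : 0 ≤ γ) (hγ1 : γ < 1)
    (N : S × A → ℝ)
    (Cr CT εr εT : ℝ)
    (f : ℝ) (hf0 : 0 ≤ f) (hf1 : f ≤ 1)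
    (Tbar That : S → A → S → ℝ) (hTbar : IsKernel Tbar) (hThat : IsKernel That)
    (hTbarT : ∀ s a, ∑ s', |Tbar s a s' - T s a s'| ≤ CT / Real.sqrt (N (s, a)))
    (hThatTbar : ∀ s a, ∑ s', |That s a s' - Tbar s a s'| ≤ εT)
    (rbar rhat : ℝ → S × A → ℝ)
    (hrbar : ∀ β, 0 ≤ β → ∀ p : S × A,
      |rbar β p - (R p - β * μ / πbar p.1 p.2)| ≤ Cr / Real.sqrt (N p))
    (hrhat : ∀ β, 0 ≤ β → ∀ p : S × A, |rhat β p - rbar β p| ≤ εr)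
    (Tf : S → A → S → ℝ)
    (hTf : ∀ s a s', Tf s a s' = (1 - f) * Tbar s a s' + f * That s a s')
    (ψ : S × A → ℝ)
    (hψ : ∀ p : S × A, ψ p = Cr / Real.sqrt (N p) + εr
      + γ * (CT / Real.sqrt (N p) + f * εT) * (Rmax / (1 - γ)))
    (Qpi : S × A → ℝ) (hQpi : bellman T R π γ Qpi = Qpi)
    (Qhat : ℝ → S × A → ℝ)
    (hQhat : ∀ β, 0 ≤ β → bellman Tf (rhat β) π γ (Qhat β) = Qhat β) :
    ∀ β, 0 ≤ β → ∀ p : S × A,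
      (|Qhat β p - Qpi p
          + β * Sop Tf π γ (fun q => μ / πbar q.1 q.2) p|
        ≤ Sop Tf π γ ψ p) ∧
      (Qpi p - β * Sop Tf π γ (fun q => μ / πbar q.1 q.2) p - Sop Tf π γ ψ p
        ≤ Qhat β p) ∧
      (Qhat β p
        ≤ Qpi p - β * Sop Tf π γ (fun q => μ / πbar q.1 q.2) p
          + Sop Tf π γ ψ p) := by
  intro β hβ
  have hTfK : IsKernel Tf := by
    convert hTbar.mix hThat hf0 hf1 using 1
    exact funext fun s => funext fun a => funext (hTf s a)
  have hQpi_le := abs_le_of_bellman_eq hT hπ hγ0 hγ1 hR hQpi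
  have hsandwich : ∀ p, |(Qhat β - Qpi + β • Sop Tf π γ fun q => μ / πbar q.1 q.2) p|
      ≤ Sop Tf π γ ψ p := by
    refine abs_le_Sop hTfK hπ hγ0 hγ1 fun p => ?_
    rw [mulVec_add, mulVec_sub, mulVec_smul, one_sub_smul_saMatrix_mulVec_Sop hTfK hπ hγ0 hγ1,
      one_sub_smul_saMatrix_mulVec_of_bellman_eq (hQhat β hβ),
      one_sub_smul_saMatrix_mulVec_eq_sub_of_bellman_eq hQpi Tf]
    have hr_err : |rhat β p - (R p - β * μ / πbar p.1 p.2)| ≤ Cr / √(N p) + εr :=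
      (abs_sub_le _ (rbar β p) _).trans (by linarith [hrhat β hβ p, hrbar β hβ p])
    have hT_err : ∑ s', |Tf p.1 p.2 s' - T p.1 p.2 s'| ≤ CT / √(N p) + f * εT := by
      simp only [hTf]
      exact (sum_abs_mix_sub_le _ _ _ _ hf0).trans
        (add_le_add (hTbarT p.1 p.2) (mul_le_mul_of_nonneg_left (hThatTbar p.1 p.2) hf0))
    have hP_err := (abs_saMatrix_mulVec_sub_le (T' := Tf) hπ hQpi_le p).trans
      (mul_le_mul_of_nonneg_right hT_err ((abs_nonneg _).trans (hQpi_le p)))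
    calc _ = |(rhat β p - (R p - β * μ / πbar p.1 p.2))
            + γ * ((saMatrix Tf π *ᵥ Qpi) p - (saMatrix T π *ᵥ Qpi) p)| := by
          simp only [Pi.add_apply, Pi.sub_apply, Pi.smul_apply, smul_eq_mul]
          ring_nf
      _ ≤ (Cr / √(N p) + εr) + γ * ((CT / √(N p) + f * εT) * (Rmax / (1 - γ))) := by
          refine (abs_add_le _ _).trans (add_le_add hr_err ?_)
          rw [abs_mul, abs_of_nonneg hγ0]
          exact mul_le_mul_of_nonneg_left hP_err hγ0
      _ = ψ p := by rw [hψ p]; ring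
  intro p
  have h := hsandwich p
  simp only [Pi.add_apply, Pi.sub_apply, Pi.smul_apply, smul_eq_mul] at h
  exact ⟨h, by linarith [abs_le.mp h], by linarith [abs_le.mp h]⟩

/-- Fixed-point sandwich: the CROP Q-function `Q̂^π_β` satisfies
`|Q̂^π_β − Q^π + β·S^π_f(μ/π̄)| ≤ S^π_f ψ` pointwise. -/
theorem stmt_8 {S A : Type*} [Fintype S] [Fintype A] [Nonempty S] [Nonempty A]
    [DecidableEq S] [DecidableEq A]
    (T : S → A → S → ℝ) (hT : IsKernel T)
    (R : S × A → ℝ) (Rmax : ℝ) (hR : ∀ p : S × A, |R p| ≤ Rmax)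
    (πbar : S → A → ℝ) (hπbar : IsPolicy πbar)
    (hπbarpos : ∀ s a, 0 < πbar s a)
    (μ : ℝ) (hμ : μ = (Fintype.card A : ℝ)⁻¹)
    (π : S → A → ℝ) (hπ : IsPolicy π)
    (γ : ℝ) (hγ0 : 0 ≤ γ) (hγ1 : γ < 1)
    (N : S × A → ℝ) (hN : ∀ p : S × A, 1 ≤ N p)
    (Cr CT εr εT : ℝ)
    (hCr : 0 ≤ Cr) (hCT : 0 ≤ CT) (hεr : 0 ≤ εr) (hεT : 0 ≤ εT)
    (f : ℝ) (hf0 : 0 ≤ f) (hf1 : f ≤ 1)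
    (Tbar That : S → A → S → ℝ) (hTbar : IsKernel Tbar) (hThat : IsKernel That)
    (hTbarT : ∀ s a, ∑ s', |Tbar s a s' - T s a s'| ≤ CT / Real.sqrt (N (s, a)))
    (hThatTbar : ∀ s a, ∑ s', |That s a s' - Tbar s a s'| ≤ εT)
    (rbar rhat : ℝ → S × A → ℝ)
    (hrbar : ∀ β, 0 ≤ β → ∀ p : S × A,
      |rbar β p - (R p - β * μ / πbar p.1 p.2)| ≤ Cr / Real.sqrt (N p))
    (hrhat : ∀ β, 0 ≤ β → ∀ p : S × A, |rhat β p - rbar β p| ≤ εr)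
    (Tf : S → A → S → ℝ)
    (hTf : ∀ s a s', Tf s a s' = (1 - f) * Tbar s a s' + f * That s a s')
    (ψ : S × A → ℝ)
    (hψ : ∀ p : S × A, ψ p = Cr / Real.sqrt (N p) + εr
      + γ * (CT / Real.sqrt (N p) + f * εT) * (Rmax / (1 - γ)))
    (Qpi : S × A → ℝ) (hQpi : bellman T R π γ Qpi = Qpi)
    (Qhat : ℝ → S × A → ℝ)
    (hQhat : ∀ β, 0 ≤ β → bellman Tf (rhat β) π γ (Qhat β) = Qhat β) :
    ∀ β, 0 ≤ β → ∀ p : S × A,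
      (|Qhat β p - Qpi p
          + β * Sop Tf π γ (fun q => μ / πbar q.1 q.2) p|
        ≤ Sop Tf π γ ψ p) ∧
      (Qpi p - β * Sop Tf π γ (fun q => μ / πbar q.1 q.2) p - Sop Tf π γ ψ p
        ≤ Qhat β p) ∧
      (Qhat β p
        ≤ Qpi p - β * Sop Tf π γ (fun q => μ / πbar q.1 q.2) p
          + Sop Tf π γ ψ p) :=
  stmt_8_general T hT R Rmax hR πbar μ π hπ γ hγ0 hγ1 N Cr CT εr εT f hf0 hf1 Tbar That hTbar hThat
    hTbarT hThatTbar rbar rhat hrbar hrhat Tf hTf ψ hψ Qpi hQpi Qhat hQhat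
end

section
/- (Proposition 1.) In the CROP setup, let μ₀ : S → ℝ be a probability distribution on S (μ₀ s ≥ 0, ∑_s μ₀ s = 1). Then there exists β₀ ≥ 0 such that for all β ≥ β₀: ∑_s μ₀ s · ∑_a π s a · Q̂^π_β(s,a) ≤ ∑_s μ₀ s · ∑_a π s a · Q^π(s,a); that is, for sufficiently large conservatism coefficient β, the expected CROP Q-value under the initial state distribution and policy π underestimates the true expected Q-value. -/
open Finset

section Helpers

lemma saMatrix_row_sum {S A : Type*} [Fintype S] [Fintype A]
    (T : S → A → S → ℝ) (hT : IsKernel T) (π : S → A → ℝ) (hπ : IsPolicy π)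
    (p : S × A) : ∑ q, saMatrix T π p q = 1 := by
  rw [Fintype.sum_prod_type]
  have : ∀ s' : S, ∑ a', saMatrix T π p (s', a') = T p.1 p.2 s' := by
    intro s'
    simp only [saMatrix, Matrix.of_apply, ← Finset.mul_sum, hπ.2 s', mul_one]
  simp_rw [this]
  exact hT.2 p.1 p.2

lemma fixed_upper {S A : Type*} [Fintype S] [Fintype A] [Nonempty S] [Nonempty A]
    (T : S → A → S → ℝ) (hT : IsKernel T) (π : S → A → ℝ) (hπ : IsPolicy π)
    (r : S × A → ℝ) (γ : ℝ) (hγ0 : 0 ≤ γ) (hγ1 : γ < 1)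
    (Q : S × A → ℝ) (hQ : bellman T r π γ Q = Q)
    (c : ℝ) (hc : ∀ p, r p ≤ c) : ∀ p, Q p ≤ c / (1 - γ) := by
  obtain ⟨p₀, -, hp₀⟩ := Finset.exists_max_image Finset.univ Q ⟨Classical.arbitrary _, Finset.mem_univ _⟩
  have hmax : ∀ p, Q p ≤ Q p₀ := fun p => hp₀ p (Finset.mem_univ p)
  have key : Q p₀ ≤ c + γ * Q p₀ := by
    conv_lhs => rw [← hQ]
    have h1 : ∑ q, saMatrix T π p₀ q * Q q ≤ ∑ q, saMatrix T π p₀ q * Q p₀ := by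
      apply Finset.sum_le_sum
      intro q _
      exact mul_le_mul_of_nonneg_left (hmax q) (mul_nonneg (hT.1 _ _ _) (hπ.1 _ _))
    have h2 : ∑ q, saMatrix T π p₀ q * Q p₀ = Q p₀ := by
      rw [← Finset.sum_mul, saMatrix_row_sum T hT π hπ, one_mul]
    calc bellman T r π γ Q p₀ = r p₀ + γ * ∑ q, saMatrix T π p₀ q * Q q := rfl
      _ ≤ c + γ * Q p₀ := by
          apply add_le_add (hc p₀)
          apply mul_le_mul_of_nonneg_left _ hγ0
          rw [← h2]; exact h1
  have hγ : 0 < 1 - γ := by linarith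
  intro p
  have : Q p₀ ≤ c / (1 - γ) := by
    rw [le_div_iff₀ hγ]; nlinarith
  exact (hmax p).trans this

lemma fixed_lower {S A : Type*} [Fintype S] [Fintype A] [Nonempty S] [Nonempty A]
    (T : S → A → S → ℝ) (hT : IsKernel T) (π : S → A → ℝ) (hπ : IsPolicy π)
    (r : S × A → ℝ) (γ : ℝ) (hγ0 : 0 ≤ γ) (hγ1 : γ < 1)
    (Q : S × A → ℝ) (hQ : bellman T r π γ Q = Q)
    (c : ℝ) (hc : ∀ p, c ≤ r p) : ∀ p, c / (1 - γ) ≤ Q p := by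
  have hneg : bellman T (fun p => -(r p)) π γ (fun p => -(Q p)) = fun p => -(Q p) := by
    funext p
    have := congrFun hQ p
    simp only [bellman] at this ⊢
    simp_rw [mul_neg, Finset.sum_neg_distrib, mul_neg]
    linarith
  intro p
  have := fixed_upper T hT π hπ (fun p => -(r p)) γ hγ0 hγ1 (fun p => -(Q p)) hneg (-c)
    (fun p => neg_le_neg (hc p)) p
  have h : -(Q p) ≤ -c / (1 - γ) := this
  rw [neg_div] at h
  linarith

end Helpers

/-- Proposition 1 of the paper: for sufficiently large conservatism
coefficient `β`, the expected CROP Q-value under the initial state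
distribution and policy `π` underestimates the true expected Q-value. -/
theorem stmt_9 {S A : Type*} [Fintype S] [Fintype A] [Nonempty S] [Nonempty A]
    (T : S → A → S → ℝ) (hT : IsKernel T)
    (R : S × A → ℝ) (Rmax : ℝ) (hR : ∀ p : S × A, |R p| ≤ Rmax)
    (πbar : S → A → ℝ) (hπbar : IsPolicy πbar)
    (hπbarpos : ∀ s a, 0 < πbar s a)
    (μ : ℝ) (hμ : μ = (Fintype.card A : ℝ)⁻¹)
    (π : S → A → ℝ) (hπ : IsPolicy π)
    (γ : ℝ) (hγ0 : 0 ≤ γ) (hγ1 : γ < 1)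
    (N : S × A → ℝ) (hN : ∀ p : S × A, 1 ≤ N p)
    (Cr CT εr εT : ℝ)
    (hCr : 0 ≤ Cr) (hCT : 0 ≤ CT) (hεr : 0 ≤ εr) (hεT : 0 ≤ εT)
    (f : ℝ) (hf0 : 0 ≤ f) (hf1 : f ≤ 1)
    (Tbar That : S → A → S → ℝ) (hTbar : IsKernel Tbar) (hThat : IsKernel That)
    (hTbarT : ∀ s a, ∑ s', |Tbar s a s' - T s a s'| ≤ CT / Real.sqrt (N (s, a)))
    (hThatTbar : ∀ s a, ∑ s', |That s a s' - Tbar s a s'| ≤ εT)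
    (rbar rhat : ℝ → S × A → ℝ)
    (hrbar : ∀ β, 0 ≤ β → ∀ p : S × A,
      |rbar β p - (R p - β * μ / πbar p.1 p.2)| ≤ Cr / Real.sqrt (N p))
    (hrhat : ∀ β, 0 ≤ β → ∀ p : S × A, |rhat β p - rbar β p| ≤ εr)
    (Tf : S → A → S → ℝ)
    (hTf : ∀ s a s', Tf s a s' = (1 - f) * Tbar s a s' + f * That s a s')
    (Qpi : S × A → ℝ) (hQpi : bellman T R π γ Qpi = Qpi)
    (Qhat : ℝ → S × A → ℝ)
    (hQhat : ∀ β, 0 ≤ β → bellman Tf (rhat β) π γ (Qhat β) = Qhat β)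
    (μ₀ : S → ℝ) (hμ₀0 : ∀ s, 0 ≤ μ₀ s) (hμ₀1 : ∑ s, μ₀ s = 1) :
    ∃ β₀ : ℝ, 0 ≤ β₀ ∧ ∀ β, β₀ ≤ β →
      ∑ s, μ₀ s * ∑ a, π s a * Qhat β (s, a)
        ≤ ∑ s, μ₀ s * ∑ a, π s a * Qpi (s, a) := by
  have hRmax : 0 ≤ Rmax := le_trans (abs_nonneg _) (hR (Classical.arbitrary _))
  have hcard : (0:ℝ) < Fintype.card A := by
    exact_mod_cast Fintype.card_pos
  have hμpos : 0 < μ := by rw [hμ]; exact inv_pos.mpr hcard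
  refine ⟨(2*Rmax + Cr + εr)/μ, div_nonneg (by linarith) hμpos.le, ?_⟩
  intro β hβ
  have hβ0 : 0 ≤ β := le_trans (div_nonneg (by linarith) hμpos.le) hβ
  have hβμ : 2*Rmax + Cr + εr ≤ β * μ := by
    have := (div_le_iff₀ hμpos).mp hβ
    linarith [mul_comm β μ]
  have hTfK : IsKernel Tf := by
    constructor
    · intro s a s'
      rw [hTf]
      have := hTbar.1 s a s'
      have := hThat.1 s a s'
      nlinarith
    · intro s a
      simp_rw [hTf]
      rw [Finset.sum_add_distrib, ← Finset.mul_sum, ← Finset.mul_sum, hTbar.2, hThat.2]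
      ring
  have hrub : ∀ p : S × A, rhat β p ≤ -Rmax := by
    intro p
    have h1 := (abs_le.mp (hrbar β hβ0 p)).2
    have h2 := (abs_le.mp (hrhat β hβ0 p)).2
    have hsq : 1 ≤ Real.sqrt (N p) := by
      rw [show (1:ℝ) = Real.sqrt 1 from (Real.sqrt_one).symm]
      exact Real.sqrt_le_sqrt (hN p)
    have hCrN : Cr / Real.sqrt (N p) ≤ Cr := div_le_self hCr hsq
    have hπb1 : πbar p.1 p.2 ≤ 1 := by
      have hle : πbar p.1 p.2 ≤ ∑ a, πbar p.1 a :=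
        Finset.single_le_sum (fun a _ => hπbar.1 p.1 a) (Finset.mem_univ p.2)
      rw [hπbar.2 p.1] at hle
      exact hle
    have hfrac : β * μ ≤ β * μ / πbar p.1 p.2 := by
      rw [le_div_iff₀ (hπbarpos p.1 p.2)]
      nlinarith [hπbarpos p.1 p.2, mul_nonneg hβ0 hμpos.le]
    have hRp : R p ≤ Rmax := (abs_le.mp (hR p)).2
    linarith
  have hup := fixed_upper Tf hTfK π hπ (rhat β) γ hγ0 hγ1 (Qhat β) (hQhat β hβ0) (-Rmax) hrub
  have hlo := fixed_lower T hT π hπ R γ hγ0 hγ1 Qpi hQpi (-Rmax)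
    (fun p => (abs_le.mp (hR p)).1)
  have hpt : ∀ p : S × A, Qhat β p ≤ Qpi p := fun p => (hup p).trans (hlo p)
  apply Finset.sum_le_sum
  intro s _
  apply mul_le_mul_of_nonneg_left _ (hμ₀0 s)
  apply Finset.sum_le_sum
  intro a _
  exact mul_le_mul_of_nonneg_left (hpt (s, a)) (hπ.1 s a)
end

section
/- (Simulation lemma, sup-norm form.) Let S and A be nonempty finite types, π a policy, γ ∈ [0,1), r : S × A → ℝ a reward with |r(s,a)| ≤ R_max for all (s,a), and T₁, T₂ transition kernels such that ∑_{s'} |T₁ s a s' − T₂ s a s'| ≤ ε for all (s,a), for some ε ≥ 0. Let Q₁ = Q^{T₁,r,π} and Q₂ = Q^{T₂,r,π}. Then ‖Q₁ − Q₂‖∞ ≤ γ·ε·R_max/(1−γ)². -/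
open Finset

/-- Simulation lemma, sup-norm form: if the two kernels differ by at most `ε`
in total variation, then the corresponding Bellman fixed points satisfy
`‖Q₁ − Q₂‖∞ ≤ γ·ε·R_max/(1−γ)²`. -/
theorem stmt_14 {S A : Type*} [Fintype S] [Fintype A] [Nonempty S] [Nonempty A]
    (π : S → A → ℝ) (hπ : IsPolicy π)
    (γ : ℝ) (hγ0 : 0 ≤ γ) (hγ1 : γ < 1)
    (r : S × A → ℝ) (Rmax : ℝ) (hr : ∀ p : S × A, |r p| ≤ Rmax)
    (T₁ T₂ : S → A → S → ℝ) (hT₁ : IsKernel T₁) (hT₂ : IsKernel T₂)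
    (ε : ℝ) (hε : 0 ≤ ε)
    (hTd : ∀ s a, ∑ s', |T₁ s a s' - T₂ s a s'| ≤ ε)
    (Q₁ Q₂ : S × A → ℝ)
    (hQ₁ : bellman T₁ r π γ Q₁ = Q₁) (hQ₂ : bellman T₂ r π γ Q₂ = Q₂) :
    ‖Q₁ - Q₂‖ ≤ γ * ε * Rmax / (1 - γ) ^ 2 := by
  classical
  have h1γ : (0:ℝ) < 1 - γ := by linarith
  have hrow : ∀ (T : S → A → S → ℝ), IsKernel T → ∀ p : S × A,
      ∑ q, saMatrix T π p q = 1 := by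
    intro T hT p
    rw [Fintype.sum_prod_type]
    simp only [saMatrix, Matrix.of_apply]
    calc ∑ s', ∑ a', T p.1 p.2 s' * π s' a'
        = ∑ s', T p.1 p.2 s' * ∑ a', π s' a' := by
          simp [Finset.mul_sum]
      _ = ∑ s', T p.1 p.2 s' := by simp [hπ.2]
      _ = 1 := hT.2 p.1 p.2
  have hbound : ∀ (c v : S × A → ℝ), |∑ q, c q * v q| ≤ (∑ q, |c q|) * ‖v‖ := by
    intro c v
    calc |∑ q, c q * v q| ≤ ∑ q, |c q * v q| := Finset.abs_sum_le_sum_abs _ _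
      _ = ∑ q, |c q| * |v q| := by simp [abs_mul]
      _ ≤ ∑ q, |c q| * ‖v‖ := Finset.sum_le_sum (fun q _ =>
           mul_le_mul_of_nonneg_left (by rw [← Real.norm_eq_abs]; exact norm_le_pi_norm v q) (abs_nonneg _))
      _ = (∑ q, |c q|) * ‖v‖ := by rw [Finset.sum_mul]
  have hRmax : 0 ≤ Rmax := le_trans (abs_nonneg _) (hr (Classical.arbitrary _))
  have habs2 : ∀ p : S × A, ∑ q, |saMatrix T₂ π p q| = 1 := by
    intro p
    rw [← hrow T₂ hT₂ p]
    exact Finset.sum_congr rfl fun q _ =>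
      abs_of_nonneg (mul_nonneg (hT₂.1 _ _ _) (hπ.1 _ _))
  have habs1 : ∀ p : S × A, ∑ q, |saMatrix T₁ π p q| = 1 := by
    intro p
    rw [← hrow T₁ hT₁ p]
    exact Finset.sum_congr rfl fun q _ =>
      abs_of_nonneg (mul_nonneg (hT₁.1 _ _ _) (hπ.1 _ _))
  have hQ2norm : (1 - γ) * ‖Q₂‖ ≤ Rmax := by
    have hb : ‖Q₂‖ ≤ Rmax + γ * ‖Q₂‖ := by
      have hnn : (0:ℝ) ≤ Rmax + γ * ‖Q₂‖ := by positivity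
      rw [pi_norm_le_iff_of_nonneg hnn]
      intro p
      have hp := congrFun hQ₂ p
      rw [Real.norm_eq_abs, ← hp]
      show |r p + γ * ∑ q, saMatrix T₂ π p q * Q₂ q| ≤ _
      calc |r p + γ * ∑ q, saMatrix T₂ π p q * Q₂ q|
          ≤ |r p| + |γ * ∑ q, saMatrix T₂ π p q * Q₂ q| := abs_add_le _ _
        _ ≤ Rmax + γ * ((∑ q, |saMatrix T₂ π p q|) * ‖Q₂‖) := by
            rw [abs_mul, abs_of_nonneg hγ0]
            exact add_le_add (hr p) (mul_le_mul_of_nonneg_left (hbound _ _) hγ0)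
        _ = Rmax + γ * ‖Q₂‖ := by rw [habs2 p, one_mul]
    linarith
  -- difference bound
  have hDrow : ∀ p : S × A, ∑ q, |saMatrix T₁ π p q - saMatrix T₂ π p q| ≤ ε := by
    intro p
    have : ∀ q : S × A, |saMatrix T₁ π p q - saMatrix T₂ π p q|
        = |T₁ p.1 p.2 q.1 - T₂ p.1 p.2 q.1| * π q.1 q.2 := by
      intro q
      simp only [saMatrix, Matrix.of_apply]
      rw [← sub_mul, abs_mul, abs_of_nonneg (hπ.1 _ _)]
    rw [Fintype.sum_prod_type]
    calc ∑ s', ∑ a', |saMatrix T₁ π p (s', a') - saMatrix T₂ π p (s', a')|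
        = ∑ s', |T₁ p.1 p.2 s' - T₂ p.1 p.2 s'| * ∑ a', π s' a' := by
          simp only [this]; simp [Finset.mul_sum]
      _ = ∑ s', |T₁ p.1 p.2 s' - T₂ p.1 p.2 s'| := by simp [hπ.2]
      _ ≤ ε := hTd p.1 p.2
  have hDnorm : (1 - γ) * ‖Q₁ - Q₂‖ ≤ γ * ε * ‖Q₂‖ := by
    have hb : ‖Q₁ - Q₂‖ ≤ γ * ‖Q₁ - Q₂‖ + γ * (ε * ‖Q₂‖) := by
      have hnn : (0:ℝ) ≤ γ * ‖Q₁ - Q₂‖ + γ * (ε * ‖Q₂‖) := by positivity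
      rw [pi_norm_le_iff_of_nonneg hnn]
      intro p
      have hp1 := congrFun hQ₁ p
      have hp2 := congrFun hQ₂ p
      have key : (Q₁ - Q₂) p = γ * (∑ q, saMatrix T₁ π p q * (Q₁ - Q₂) q)
          + γ * (∑ q, (saMatrix T₁ π p q - saMatrix T₂ π p q) * Q₂ q) := by
        have : (Q₁ - Q₂) p = (r p + γ * ∑ q, saMatrix T₁ π p q * Q₁ q)
            - (r p + γ * ∑ q, saMatrix T₂ π p q * Q₂ q) := by
          simp only [Pi.sub_apply]
          rw [← hp1, ← hp2]
          rfl
        rw [this]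
        have h1 : ∑ q, saMatrix T₁ π p q * Q₁ q
            = ∑ q, saMatrix T₁ π p q * (Q₁ - Q₂) q
              + ∑ q, saMatrix T₁ π p q * Q₂ q := by
          rw [← Finset.sum_add_distrib]
          exact Finset.sum_congr rfl fun q _ => by simp [Pi.sub_apply]; ring
        rw [h1]
        have h2 : ∑ q, (saMatrix T₁ π p q - saMatrix T₂ π p q) * Q₂ q
            = ∑ q, saMatrix T₁ π p q * Q₂ q - ∑ q, saMatrix T₂ π p q * Q₂ q := by
          rw [← Finset.sum_sub_distrib]
          exact Finset.sum_congr rfl fun q _ => by ring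
        rw [h2]; ring
      rw [Real.norm_eq_abs, key]
      calc |γ * (∑ q, saMatrix T₁ π p q * (Q₁ - Q₂) q)
          + γ * (∑ q, (saMatrix T₁ π p q - saMatrix T₂ π p q) * Q₂ q)|
          ≤ γ * |∑ q, saMatrix T₁ π p q * (Q₁ - Q₂) q|
            + γ * |∑ q, (saMatrix T₁ π p q - saMatrix T₂ π p q) * Q₂ q| := by
            calc _ ≤ |γ * (∑ q, saMatrix T₁ π p q * (Q₁ - Q₂) q)|
                + |γ * (∑ q, (saMatrix T₁ π p q - saMatrix T₂ π p q) * Q₂ q)| := abs_add_le _ _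
              _ = _ := by rw [abs_mul, abs_mul, abs_of_nonneg hγ0]
        _ ≤ γ * ((∑ q, |saMatrix T₁ π p q|) * ‖Q₁ - Q₂‖)
            + γ * ((∑ q, |saMatrix T₁ π p q - saMatrix T₂ π p q|) * ‖Q₂‖) :=
            add_le_add (mul_le_mul_of_nonneg_left (hbound _ _) hγ0)
              (mul_le_mul_of_nonneg_left (hbound _ _) hγ0)
        _ ≤ γ * ‖Q₁ - Q₂‖ + γ * (ε * ‖Q₂‖) := by
            rw [habs1 p, one_mul]
            exact add_le_add le_rfl (mul_le_mul_of_nonneg_left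
              (mul_le_mul_of_nonneg_right (hDrow p) (norm_nonneg _)) hγ0)
    linarith
  rw [le_div_iff₀ (by positivity : (0:ℝ) < (1 - γ)^2)]
  have h1 : (1 - γ) * ((1 - γ) * ‖Q₁ - Q₂‖) ≤ (1 - γ) * (γ * ε * ‖Q₂‖) :=
    mul_le_mul_of_nonneg_left hDnorm h1γ.le
  have h2 : γ * ε * ((1 - γ) * ‖Q₂‖) ≤ γ * ε * Rmax :=
    mul_le_mul_of_nonneg_left hQ2norm (mul_nonneg hγ0 hε)
  nlinarith [h1, h2]
end

section
/- (Proposition 3, safe policy improvement with explicit tolerance.) In the CROP setup with two evaluation policies π* and the behavior policy π̄, fix β ≥ 0 and let μ₀ : S → ℝ be a probability distribution on S. For a policy π and g : S × A → ℝ write E_{μ₀,π}[g] = ∑_s μ₀ s · ∑_a π s a · g(s,a). Suppose E_{μ₀,π*}[Q̂^{π*}_β] ≥ E_{μ₀,π̄}[Q̂^{π̄}_β] (e.g., π* maximizes the CROP objective over policies). Then E_{μ₀,π*}[Q^{π*}] ≥ E_{μ₀,π̄}[Q^{π̄}] − δ, where δ = E_{μ₀,π̄}[S^{π̄}_f (β·μ/π̄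 + ψ)] + E_{μ₀,π*}[S^{π*}_f ψ] and (μ/π̄)(s,a) = μ/π̄ s a. -/
open Finset

/-- If `D ≤ γ P D` pointwise for a row-stochastic nonnegative `P` and `0 ≤ γ < 1`,
then `D ≤ 0`. -/
lemma crop_contraction_nonpos {ι : Type*} [Fintype ι] [Nonempty ι]
    (P : ι → ι → ℝ) (hP0 : ∀ i j, 0 ≤ P i j) (hP1 : ∀ i, ∑ j, P i j = 1)
    (γ : ℝ) (hγ0 : 0 ≤ γ) (hγ1 : γ < 1)
    (D : ι → ℝ) (hD : ∀ i, D i ≤ γ * ∑ j, P i j * D j) :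
    ∀ i, D i ≤ 0 := by
  obtain ⟨i₀, -, hmax⟩ := Finset.exists_max_image Finset.univ D
    ⟨Classical.arbitrary ι, Finset.mem_univ _⟩
  have key : D i₀ ≤ γ * D i₀ := by
    calc D i₀ ≤ γ * ∑ j, P i₀ j * D j := hD i₀
    _ ≤ γ * ∑ j, P i₀ j * D i₀ := by
        apply mul_le_mul_of_nonneg_left _ hγ0
        exact Finset.sum_le_sum fun j _ =>
          mul_le_mul_of_nonneg_left (hmax j (Finset.mem_univ j)) (hP0 i₀ j)
    _ = γ * D i₀ := by rw [← Finset.sum_mul, hP1]; ring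
  have h0 : D i₀ ≤ 0 := by nlinarith
  exact fun i => le_trans (hmax i (Finset.mem_univ i)) h0

section SA

variable {S A : Type*} [Fintype S] [Fintype A] [Nonempty S] [Nonempty A]

lemma crop_saMatrix_nonneg {T : S → A → S → ℝ} {ρ : S → A → ℝ}
    (hT : IsKernel T) (hρ : IsPolicy ρ) (p q : S × A) :
    0 ≤ saMatrix T ρ p q :=
  mul_nonneg (hT.1 _ _ _) (hρ.1 _ _)

lemma crop_saMatrix_rowsum {T : S → A → S → ℝ} {ρ : S → A → ℝ}
    (hT : IsKernel T) (hρ : IsPolicy ρ) (p : S × A) :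
    ∑ q, saMatrix T ρ p q = 1 := by
  rw [Fintype.sum_prod_type]
  have : ∀ s' : S, ∑ a', saMatrix T ρ p (s', a') = T p.1 p.2 s' := by
    intro s'
    simp only [saMatrix, Matrix.of_apply, ← Finset.mul_sum, hρ.2 s', mul_one]
  simp only [this, hT.2]

/-- Key inequality: if `V - γ P V ≤ u` pointwise, then `V ≤ Sop u`. -/
lemma crop_le_Sop [DecidableEq S] [DecidableEq A]
    {K : S → A → S → ℝ} {ρ : S → A → ℝ}
    (hK : IsKernel K) (hρ : IsPolicy ρ)
    {γ : ℝ} (hγ0 : 0 ≤ γ) (hγ1 : γ < 1)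
    (V u : S × A → ℝ)
    (h : ∀ p, V p - γ * ∑ q, saMatrix K ρ p q * V q ≤ u p) :
    ∀ p, V p ≤ Sop K ρ γ u p := by
  set P := saMatrix K ρ with hPdef
  have hP0 : ∀ i j, 0 ≤ P i j := crop_saMatrix_nonneg hK hρ
  have hP1 : ∀ i, ∑ j, P i j = 1 := crop_saMatrix_rowsum hK hρ
  set M : Matrix (S × A) (S × A) ℝ := 1 - γ • P with hM
  have expand : ∀ w : S × A → ℝ, ∀ p,
      M.mulVec w p = w p - γ * ∑ q, P p q * w q := by
    intro w p
    simp only [hM, Matrix.mulVec, dotProduct, Matrix.sub_apply,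
      Matrix.one_apply, Matrix.smul_apply, smul_eq_mul, sub_mul, ite_mul,
      one_mul, zero_mul]
    rw [Finset.sum_sub_distrib, Finset.sum_ite_eq, Finset.mul_sum]
    simp [mul_assoc, mul_comm, mul_left_comm]
  have hdet : IsUnit M.det := by
    rw [isUnit_iff_ne_zero]
    intro hd
    obtain ⟨v, hv0, hv⟩ := Matrix.exists_mulVec_eq_zero_iff.2 hd
    have hv' : ∀ i, v i = γ * ∑ j, P i j * v j := by
      intro i
      have := congrFun hv i
      rw [expand v i] at this
      simp only [Pi.zero_apply] at this
      linarith
    have h1 := crop_contraction_nonpos P hP0 hP1 γ hγ0 hγ1 v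
      (fun i => le_of_eq (hv' i))
    have h2 := crop_contraction_nonpos P hP0 hP1 γ hγ0 hγ1 (fun i => -v i)
      (by
        intro i
        have hneg : γ * ∑ j, P i j * -v j = -(γ * ∑ j, P i j * v j) := by
          simp [mul_neg, Finset.sum_neg_distrib]
        exact le_of_eq (by rw [hneg, ← hv' i])
        )
    apply hv0
    funext i
    have h2i := h2 i
    simp only [neg_nonpos] at h2i
    have : v i = 0 := le_antisymm (h1 i) (by simpa using h2i)
    simpa using this
  have hMw : ∀ p, Sop K ρ γ u p - γ * ∑ q, P p q * Sop K ρ γ u q = u p := by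
    have hmm : M.mulVec (M⁻¹.mulVec u) = u := by
      rw [Matrix.mulVec_mulVec, Matrix.mul_nonsing_inv M hdet, Matrix.one_mulVec]
    intro p
    have := congrFun hmm p
    rw [expand] at this
    exact this
  intro p
  set D : S × A → ℝ := fun q => V q - Sop K ρ γ u q with hD
  have hDle : ∀ i, D i ≤ γ * ∑ j, P i j * D j := by
    intro i
    have h1 := h i
    have h2 := hMw i
    have : γ * ∑ j, P i j * D j = (γ * ∑ j, P i j * V j) - γ * ∑ j, P i j * Sop K ρ γ u j := by
      simp only [hD, mul_sub, Finset.sum_sub_distrib, Finset.mul_sum]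
    rw [this]
    simp only [hD]
    linarith
  have := crop_contraction_nonpos P hP0 hP1 γ hγ0 hγ1 D hDle p
  simp only [hD] at this
  linarith

/-- Sup-norm bound on a Bellman fixed point. -/
lemma crop_Q_bound {K : S → A → S → ℝ} {ρ : S → A → ℝ}
    (hK : IsKernel K) (hρ : IsPolicy ρ)
    {γ : ℝ} (hγ0 : 0 ≤ γ) (hγ1 : γ < 1)
    {r : S × A → ℝ} {B : ℝ} (hB : ∀ p, |r p| ≤ B)
    {Q : S × A → ℝ} (hQ : bellman K r ρ γ Q = Q) :
    ∀ p, |Q p| ≤ B / (1 - γ) := by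
  set P := saMatrix K ρ with hPdef
  have hP0 : ∀ i j, 0 ≤ P i j := crop_saMatrix_nonneg hK hρ
  have hP1 : ∀ i, ∑ j, P i j = 1 := crop_saMatrix_rowsum hK hρ
  have hγ' : 0 < 1 - γ := by linarith
  have key := crop_contraction_nonpos P hP0 hP1 γ hγ0 hγ1
    (fun p => |Q p| - B / (1 - γ)) ?_
  · intro p
    have := key p
    linarith
  · intro p
    have hfix : Q p = r p + γ * ∑ q, P p q * Q q := (congrFun hQ p).symm
    have habs : |Q p| ≤ B + γ * ∑ q, P p q * |Q q| := by
      rw [hfix]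
      calc |r p + γ * ∑ q, P p q * Q q| ≤ |r p| + |γ * ∑ q, P p q * Q q| :=
            abs_add_le _ _
      _ ≤ B + γ * ∑ q, P p q * |Q q| := by
          apply add_le_add (hB p)
          rw [abs_mul, abs_of_nonneg hγ0]
          apply mul_le_mul_of_nonneg_left _ hγ0
          calc |∑ q, P p q * Q q| ≤ ∑ q, |P p q * Q q| := Finset.abs_sum_le_sum_abs _ _
          _ = ∑ q, P p q * |Q q| := by
              apply Finset.sum_congr rfl; intro q _
              rw [abs_mul, abs_of_nonneg (hP0 p q)]
    have hsum : γ * ∑ q, P p q * (|Q q| - B / (1 - γ))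
        = γ * (∑ q, P p q * |Q q|) - γ * (B / (1 - γ)) := by
      simp only [mul_sub, Finset.sum_sub_distrib, ← Finset.sum_mul, hP1 p]
      ring
    rw [hsum]
    have : B - B / (1 - γ) = -(γ * (B / (1 - γ))) := by
      field_simp
      ring
    linarith

end SA


/-- Proposition 3 of the paper (safe policy improvement with explicit
tolerance): if the learned policy `π` (the paper's `π*`) attains at least the
CROP value of the behavior policy `π̄` under the initial distribution `μ₀`,
then its true value is at least that of `π̄` up to the explicit tolerance
`δ = E_{μ₀,π̄}[S^{π̄}_f (β·μ/π̄ + ψ)] + E_{μ₀,π}[S^{π}_f ψ]`. -/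
theorem stmt_16 {S A : Type*} [Fintype S] [Fintype A] [Nonempty S] [Nonempty A]
    [DecidableEq S] [DecidableEq A]
    (T : S → A → S → ℝ) (hT : IsKernel T)
    (R : S × A → ℝ) (Rmax : ℝ) (hR : ∀ p : S × A, |R p| ≤ Rmax)
    (πbar : S → A → ℝ) (hπbar : IsPolicy πbar)
    (hπbarpos : ∀ s a, 0 < πbar s a)
    (μ : ℝ) (hμ : μ = (Fintype.card A : ℝ)⁻¹)
    (π : S → A → ℝ) (hπ : IsPolicy π)
    (γ : ℝ) (hγ0 : 0 ≤ γ) (hγ1 : γ < 1)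
    (N : S × A → ℝ) (hN : ∀ p : S × A, 1 ≤ N p)
    (Cr CT εr εT : ℝ)
    (hCr : 0 ≤ Cr) (hCT : 0 ≤ CT) (hεr : 0 ≤ εr) (hεT : 0 ≤ εT)
    (f : ℝ) (hf0 : 0 ≤ f) (hf1 : f ≤ 1)
    (Tbar That : S → A → S → ℝ) (hTbar : IsKernel Tbar) (hThat : IsKernel That)
    (hTbarT : ∀ s a, ∑ s', |Tbar s a s' - T s a s'| ≤ CT / Real.sqrt (N (s, a)))
    (hThatTbar : ∀ s a, ∑ s', |That s a s' - Tbar s a s'| ≤ εT)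
    (rbar rhat : ℝ → S × A → ℝ)
    (hrbar : ∀ β, 0 ≤ β → ∀ p : S × A,
      |rbar β p - (R p - β * μ / πbar p.1 p.2)| ≤ Cr / Real.sqrt (N p))
    (hrhat : ∀ β, 0 ≤ β → ∀ p : S × A, |rhat β p - rbar β p| ≤ εr)
    (Tf : S → A → S → ℝ)
    (hTf : ∀ s a s', Tf s a s' = (1 - f) * Tbar s a s' + f * That s a s')
    (β : ℝ) (hβ : 0 ≤ β)
    (ψ : S × A → ℝ)
    (hψ : ∀ p : S × A, ψ p = Cr / Real.sqrt (N p) + εr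
      + γ * (CT / Real.sqrt (N p) + f * εT) * (Rmax / (1 - γ)))
    (μ₀ : S → ℝ) (hμ₀0 : ∀ s, 0 ≤ μ₀ s) (hμ₀1 : ∑ s, μ₀ s = 1)
    (Qstar : S × A → ℝ) (hQstar : bellman T R π γ Qstar = Qstar)
    (Qbar : S × A → ℝ) (hQbar : bellman T R πbar γ Qbar = Qbar)
    (Qhatstar : S × A → ℝ)
    (hQhatstar : bellman Tf (rhat β) π γ Qhatstar = Qhatstar)
    (Qhatbar : S × A → ℝ)
    (hQhatbar : bellman Tf (rhat β) πbar γ Qhatbar = Qhatbar)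
    (hopt : ∑ s, μ₀ s * ∑ a, πbar s a * Qhatbar (s, a)
      ≤ ∑ s, μ₀ s * ∑ a, π s a * Qhatstar (s, a))
    (δ : ℝ)
    (hδ : δ = (∑ s, μ₀ s * ∑ a, πbar s a *
          Sop Tf πbar γ (fun q => β * μ / πbar q.1 q.2 + ψ q) (s, a))
        + ∑ s, μ₀ s * ∑ a, π s a * Sop Tf π γ ψ (s, a)) :
    ∑ s, μ₀ s * ∑ a, πbar s a * Qbar (s, a) - δ
      ≤ ∑ s, μ₀ s * ∑ a, π s a * Qstar (s, a) := by
  have hγ' : 0 < 1 - γ := by linarith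
  have hRmax0 : 0 ≤ Rmax := le_trans (abs_nonneg _) (hR (Classical.arbitrary _))
  have hB0 : 0 ≤ Rmax / (1 - γ) := div_nonneg hRmax0 hγ'.le
  have hμnn : 0 ≤ μ := by rw [hμ]; positivity
  have hTfK : IsKernel Tf := by
    constructor
    · intro s a s'
      rw [hTf]
      have h1 := hTbar.1 s a s'
      have h2 := hThat.1 s a s'
      nlinarith
    · intro s a
      simp only [hTf, Finset.sum_add_distrib, ← Finset.mul_sum, hTbar.2, hThat.2]
      ring
  -- reward approximation error
  have hrerr : ∀ p : S × A,
      |rhat β p - (R p - β * μ / πbar p.1 p.2)| ≤ Cr / Real.sqrt (N p) + εr := by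
    intro p
    have h1 := hrhat β hβ p
    have h2 := hrbar β hβ p
    calc |rhat β p - (R p - β * μ / πbar p.1 p.2)|
        ≤ |rhat β p - rbar β p| + |rbar β p - (R p - β * μ / πbar p.1 p.2)| :=
          abs_sub_le _ _ _
      _ ≤ Cr / Real.sqrt (N p) + εr := by linarith
  -- transition approximation error
  have hTerr : ∀ s a, ∑ s', |T s a s' - Tf s a s'|
      ≤ CT / Real.sqrt (N (s, a)) + f * εT := by
    intro s a
    have hptw : ∀ s', |T s a s' - Tf s a s'|
        ≤ |Tbar s a s' - T s a s'| + f * |That s a s' - Tbar s a s'| := by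
      intro s'
      have he : T s a s' - Tf s a s'
          = -(Tbar s a s' - T s a s') + f * -(That s a s' - Tbar s a s') := by
        rw [hTf]; ring
      rw [he]
      refine le_trans (abs_add_le _ _) ?_
      rw [abs_neg, abs_mul, abs_neg, abs_of_nonneg hf0]
    calc ∑ s', |T s a s' - Tf s a s'|
        ≤ ∑ s', (|Tbar s a s' - T s a s'| + f * |That s a s' - Tbar s a s'|) :=
          Finset.sum_le_sum fun s' _ => hptw s'
      _ = (∑ s', |Tbar s a s' - T s a s'|) + f * ∑ s', |That s a s' - Tbar s a s'| := by
          rw [Finset.sum_add_distrib, Finset.mul_sum]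
      _ ≤ CT / Real.sqrt (N (s, a)) + f * εT :=
          add_le_add (hTbarT s a) (mul_le_mul_of_nonneg_left (hThatTbar s a) hf0)
  -- difference of state-action matrices applied to a bounded function
  have hΔ : ∀ (ρ : S → A → ℝ), IsPolicy ρ → ∀ Qv : S × A → ℝ,
      (∀ q, |Qv q| ≤ Rmax / (1 - γ)) → ∀ p : S × A,
      |∑ q, (saMatrix T ρ p q - saMatrix Tf ρ p q) * Qv q|
        ≤ (CT / Real.sqrt (N p) + f * εT) * (Rmax / (1 - γ)) := by
    intro ρ hρ Qv hQv p
    have step1 : |∑ q, (saMatrix T ρ p q - saMatrix Tf ρ p q) * Qv q|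
        ≤ ∑ q : S × A, |T p.1 p.2 q.1 - Tf p.1 p.2 q.1| * ρ q.1 q.2 * (Rmax / (1 - γ)) := by
      refine le_trans (Finset.abs_sum_le_sum_abs _ _) (Finset.sum_le_sum ?_)
      intro q _
      have he : (saMatrix T ρ p q - saMatrix Tf ρ p q) * Qv q
          = ((T p.1 p.2 q.1 - Tf p.1 p.2 q.1) * ρ q.1 q.2) * Qv q := by
        simp only [saMatrix, Matrix.of_apply]; ring
      rw [he, abs_mul, abs_mul, abs_of_nonneg (hρ.1 _ _)]
      exact mul_le_mul_of_nonneg_left (hQv q)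
        (mul_nonneg (abs_nonneg _) (hρ.1 _ _))
    have step2 : ∑ q : S × A, |T p.1 p.2 q.1 - Tf p.1 p.2 q.1| * ρ q.1 q.2 * (Rmax / (1 - γ))
        = (∑ s', |T p.1 p.2 s' - Tf p.1 p.2 s'|) * (Rmax / (1 - γ)) := by
      rw [Fintype.sum_prod_type]
      have inner : ∀ s', ∑ a', |T p.1 p.2 s' - Tf p.1 p.2 s'| * ρ s' a' * (Rmax / (1 - γ))
          = |T p.1 p.2 s' - Tf p.1 p.2 s'| * (Rmax / (1 - γ)) := by
        intro s'
        rw [← Finset.sum_mul, ← Finset.mul_sum, hρ.2 s', mul_one]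
      simp only [inner]
      rw [Finset.sum_mul]
    refine le_trans step1 ?_
    rw [step2]
    exact mul_le_mul_of_nonneg_right (hTerr p.1 p.2) hB0
  -- bounds on true Q functions
  have hQstarB : ∀ p, |Qstar p| ≤ Rmax / (1 - γ) :=
    crop_Q_bound hT hπ hγ0 hγ1 hR hQstar
  have hQbarB : ∀ p, |Qbar p| ≤ Rmax / (1 - γ) :=
    crop_Q_bound hT hπbar hγ0 hγ1 hR hQbar
  -- key inequality for the behavior policy
  have key1 : ∀ p, Qbar p - Qhatbar p
      ≤ Sop Tf πbar γ (fun q => β * μ / πbar q.1 q.2 + ψ q) p := by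
    apply crop_le_Sop hTfK hπbar hγ0 hγ1
    intro p
    have hfix1 : Qbar p = R p + γ * ∑ q, saMatrix T πbar p q * Qbar q :=
      (congrFun hQbar p).symm
    have hfix2 : Qhatbar p = rhat β p + γ * ∑ q, saMatrix Tf πbar p q * Qhatbar q :=
      (congrFun hQhatbar p).symm
    have e1 : (Qbar p - Qhatbar p) - γ * ∑ q, saMatrix Tf πbar p q * (Qbar q - Qhatbar q)
        = (R p - rhat β p)
          + γ * ∑ q, (saMatrix T πbar p q - saMatrix Tf πbar p q) * Qbar q := by
      rw [hfix1, hfix2]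
      simp only [mul_sub, sub_mul, Finset.sum_sub_distrib]
      ring
    rw [e1]
    have h2 := hΔ πbar hπbar Qbar hQbarB p
    have h3 := abs_le.1 (hrerr p)
    have habs2 : γ * ∑ q, (saMatrix T πbar p q - saMatrix Tf πbar p q) * Qbar q
        ≤ γ * ((CT / Real.sqrt (N p) + f * εT) * (Rmax / (1 - γ))) :=
      mul_le_mul_of_nonneg_left (le_trans (le_abs_self _) h2) hγ0
    have hassoc : γ * ((CT / Real.sqrt (N p) + f * εT) * (Rmax / (1 - γ)))
        = γ * (CT / Real.sqrt (N p) + f * εT) * (Rmax / (1 - γ)) := (mul_assoc _ _ _).symm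
    have hψp := hψ p
    linarith [h3.1]
  -- key inequality for the learned policy
  have key2 : ∀ p, Qhatstar p - Qstar p ≤ Sop Tf π γ ψ p := by
    apply crop_le_Sop hTfK hπ hγ0 hγ1
    intro p
    have hfix1 : Qstar p = R p + γ * ∑ q, saMatrix T π p q * Qstar q :=
      (congrFun hQstar p).symm
    have hfix2 : Qhatstar p = rhat β p + γ * ∑ q, saMatrix Tf π p q * Qhatstar q :=
      (congrFun hQhatstar p).symm
    have e1 : (Qhatstar p - Qstar p) - γ * ∑ q, saMatrix Tf π p q * (Qhatstar q - Qstar q)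
        = (rhat β p - R p)
          - γ * ∑ q, (saMatrix T π p q - saMatrix Tf π p q) * Qstar q := by
      rw [hfix1, hfix2]
      simp only [mul_sub, sub_mul, Finset.sum_sub_distrib]
      ring
    rw [e1]
    have h2 := hΔ π hπ Qstar hQstarB p
    have h3 := abs_le.1 (hrerr p)
    have habs2 : -(γ * ∑ q, (saMatrix T π p q - saMatrix Tf π p q) * Qstar q)
        ≤ γ * ((CT / Real.sqrt (N p) + f * εT) * (Rmax / (1 - γ))) := by
      have h5 := mul_le_mul_of_nonneg_left (le_trans (neg_le_abs _) h2) hγ0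
      rw [mul_neg] at h5
      exact h5
    have hassoc : γ * ((CT / Real.sqrt (N p) + f * εT) * (Rmax / (1 - γ)))
        = γ * (CT / Real.sqrt (N p) + f * εT) * (Rmax / (1 - γ)) := (mul_assoc _ _ _).symm
    have hψp := hψ p
    have hμπ : 0 ≤ β * μ / πbar p.1 p.2 :=
      div_nonneg (mul_nonneg hβ hμnn) (hπbarpos p.1 p.2).le
    linarith [h3.2]
  -- expectation monotonicity and additivity
  have Emono : ∀ (ρ : S → A → ℝ), IsPolicy ρ → ∀ g h : S × A → ℝ, (∀ p, g p ≤ h p) →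
      ∑ s, μ₀ s * ∑ a, ρ s a * g (s, a) ≤ ∑ s, μ₀ s * ∑ a, ρ s a * h (s, a) := by
    intro ρ hρ g h hgh
    refine Finset.sum_le_sum fun s _ => mul_le_mul_of_nonneg_left ?_ (hμ₀0 s)
    exact Finset.sum_le_sum fun a _ => mul_le_mul_of_nonneg_left (hgh (s, a)) (hρ.1 s a)
  have A1 : ∑ s, μ₀ s * ∑ a, πbar s a * Qbar (s, a)
      ≤ (∑ s, μ₀ s * ∑ a, πbar s a * Qhatbar (s, a))
        + ∑ s, μ₀ s * ∑ a, πbar s a *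
            Sop Tf πbar γ (fun q => β * μ / πbar q.1 q.2 + ψ q) (s, a) := by
    have h1 := Emono πbar hπbar Qbar
      (fun p => Qhatbar p + Sop Tf πbar γ (fun q => β * μ / πbar q.1 q.2 + ψ q) p)
      (fun p => by
        show Qbar p ≤ Qhatbar p + Sop Tf πbar γ (fun q => β * μ / πbar q.1 q.2 + ψ q) p
        have := key1 p; linarith)
    have h2 : ∑ s, μ₀ s * ∑ a, πbar s a *
          (fun p => Qhatbar p + Sop Tf πbar γ (fun q => β * μ / πbar q.1 q.2 + ψ q) p) (s, a)
        = (∑ s, μ₀ s * ∑ a, πbar s a * Qhatbar (s, a))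
          + ∑ s, μ₀ s * ∑ a, πbar s a *
              Sop Tf πbar γ (fun q => β * μ / πbar q.1 q.2 + ψ q) (s, a) := by
      simp only [mul_add, Finset.sum_add_distrib]
    linarith
  have A2 : ∑ s, μ₀ s * ∑ a, π s a * Qhatstar (s, a)
      ≤ (∑ s, μ₀ s * ∑ a, π s a * Qstar (s, a))
        + ∑ s, μ₀ s * ∑ a, π s a * Sop Tf π γ ψ (s, a) := by
    have h1 := Emono π hπ Qhatstar
      (fun p => Qstar p + Sop Tf π γ ψ p)
      (fun p => by
        show Qhatstar p ≤ Qstar p + Sop Tf π γ ψ p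
        have := key2 p; linarith)
    have h2 : ∑ s, μ₀ s * ∑ a, π s a * (fun p => Qstar p + Sop Tf π γ ψ p) (s, a)
        = (∑ s, μ₀ s * ∑ a, π s a * Qstar (s, a))
          + ∑ s, μ₀ s * ∑ a, π s a * Sop Tf π γ ψ (s, a) := by
      simp only [mul_add, Finset.sum_add_distrib]
    linarith
  rw [hδ]
  linarith
end
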